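/- Let L > 0, τ, ε, η₁, η₂ ∈ ℝ, and let u, v : ℝ² → ℝ be smooth (C^∞) and L-periodic. Then the function φ(s) = E_FCH(u + s·v) is twice differentiable on ℝ and φ″(0) = ∫_Ω [(ε²Δv − F″(u)v)² − F‴(u)·(ε²Δu − F′(u))·v² − ε²η₁|∇v|² − η₂F″(u)v²] dx. -/

import Mathlib

open MeasureTheory

noncomputable section

/-- The box `Ω = [0,L]²` in `ℝ²` (modeled as `ℝ × ℝ`). -/
def box (L : ℝ) : Set (ℝ × ℝ) := Set.Icc (0 : ℝ) L ×ˢ Set.Icc (0 : ℝ) L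

/-- `f : ℝ² → ℝ` is `L`-periodic: periodic with period `L` in each coordinate direction. -/
def IsPeriodic (L : ℝ) (f : ℝ × ℝ → ℝ) : Prop :=
  ∀ x : ℝ × ℝ, f (x.1 + L, x.2) = f x ∧ f (x.1, x.2 + L) = f x

/-- First partial derivative `∂f/∂x₁`. -/
def pd1 (f : ℝ × ℝ → ℝ) (x : ℝ × ℝ) : ℝ := fderiv ℝ f x (1, 0)

/-- Second partial derivative `∂f/∂x₂`. -/
def pd2 (f : ℝ × ℝ → ℝ) (x : ℝ × ℝ) : ℝ := fderiv ℝ f x (0, 1)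

/-- The Laplacian `Δf = ∂²f/∂x₁² + ∂²f/∂x₂²`. -/
def lap (f : ℝ × ℝ → ℝ) (x : ℝ × ℝ) : ℝ := pd1 (pd1 f) x + pd2 (pd2 f) x

/-- The squared gradient `|∇f|² = (∂f/∂x₁)² + (∂f/∂x₂)²`. -/
def gradSq (f : ℝ × ℝ → ℝ) (x : ℝ × ℝ) : ℝ := (pd1 f x) ^ 2 + (pd2 f x) ^ 2

/-- The double-well potential `F(ζ) = ½(ζ+1)²(½(ζ−1)² + (2/3)τ(ζ−2))`. -/
def F (τ : ℝ) (ζ : ℝ) : ℝ := (1/2) * (ζ + 1) ^ 2 * ((1/2) * (ζ - 1) ^ 2 + (2/3) * τ * (ζ - 2))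

/-- The FCH free energy
`E_FCH(u) = ∫_Ω [½(ε²Δu − F′(u))² − (ε²/2)η₁|∇u|² − η₂F(u)] dx`. -/
def EFCH (L τ ε η₁ η₂ : ℝ) (u : ℝ × ℝ → ℝ) : ℝ :=
  ∫ x in box L,
    ((1/2) * (ε ^ 2 * lap u x - deriv (F τ) (u x)) ^ 2
      - (ε ^ 2 / 2) * η₁ * gradSq u x - η₂ * F τ (u x))

/-- The function `φ(s) = E_FCH(u + s v)`. -/
def phiFCH (L τ ε η₁ η₂ : ℝ) (u v : ℝ × ℝ → ℝ) : ℝ → ℝ :=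
  fun s => EFCH L τ ε η₁ η₂ (fun x => u x + s * v x)

/-! ### Auxiliary material -/

namespace FCHaux

/-- Explicit formula for `F′`. -/
def F1 (τ ζ : ℝ) : ℝ := ζ ^ 3 + τ * ζ ^ 2 - ζ - τ

/-- Explicit formula for `F″`. -/
def F2 (τ ζ : ℝ) : ℝ := 3 * ζ ^ 2 + 2 * τ * ζ - 1

/-- Explicit formula for `F‴`. -/
def F3 (τ ζ : ℝ) : ℝ := 6 * ζ + 2 * τ

lemma hasDerivAt_F (τ ζ : ℝ) : HasDerivAt (F τ) (F1 τ ζ) ζ := by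
  have h1 : HasDerivAt (fun z : ℝ => (1/2) * (z + 1) ^ 2)
      ((1/2) * ((2 : ℕ) * (ζ + 1) ^ 1 * 1)) ζ := by
    exact (((hasDerivAt_id ζ).add_const 1).pow 2).const_mul _
  have h2 : HasDerivAt (fun z : ℝ => (1/2) * (z - 1) ^ 2 + (2/3) * τ * (z - 2))
      ((1/2) * ((2 : ℕ) * (ζ - 1) ^ 1 * 1) + (2/3) * τ * 1) ζ := by
    exact ((((hasDerivAt_id ζ).sub_const 1).pow 2).const_mul _).add
      (((hasDerivAt_id ζ).sub_const 2).const_mul _)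
  exact (h1.mul h2).congr_deriv (by simp only [F1]; push_cast; ring)

lemma hasDerivAt_F1 (τ ζ : ℝ) : HasDerivAt (F1 τ) (F2 τ ζ) ζ := by
  exact (((((hasDerivAt_id ζ).pow 3).add
      (((hasDerivAt_id ζ).pow 2).const_mul τ)).sub (hasDerivAt_id ζ)).sub_const τ).congr_deriv
    (by simp only [F2, id_eq]; push_cast; ring)

lemma hasDerivAt_F2 (τ ζ : ℝ) : HasDerivAt (F2 τ) (F3 τ ζ) ζ := by
  exact (((((hasDerivAt_id ζ).pow 2).const_mul 3).add
      ((hasDerivAt_id ζ).const_mul (2 * τ))).sub_const 1).congr_deriv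
    (by simp only [F3, id_eq]; push_cast; ring)

lemma deriv_F (τ : ℝ) : deriv (F τ) = F1 τ :=
  funext fun ζ => (hasDerivAt_F τ ζ).deriv

lemma deriv2_F (τ : ℝ) : deriv (deriv (F τ)) = F2 τ := by
  rw [deriv_F]; exact funext fun ζ => (hasDerivAt_F1 τ ζ).deriv

lemma deriv3_F (τ : ℝ) : deriv (deriv (deriv (F τ))) = F3 τ := by
  rw [deriv2_F]; exact funext fun ζ => (hasDerivAt_F2 τ ζ).deriv

lemma contDiff_pd1 {f : ℝ × ℝ → ℝ} (hf : ContDiff ℝ (⊤ : ℕ∞) f) : ContDiff ℝ (⊤ : ℕ∞) (pd1 f) :=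
  (hf.fderiv_right (by simp)).clm_apply contDiff_const

lemma contDiff_pd2 {f : ℝ × ℝ → ℝ} (hf : ContDiff ℝ (⊤ : ℕ∞) f) : ContDiff ℝ (⊤ : ℕ∞) (pd2 f) :=
  (hf.fderiv_right (by simp)).clm_apply contDiff_const

lemma pd1_add_smul {u v : ℝ × ℝ → ℝ} (hu : ContDiff ℝ (⊤ : ℕ∞) u) (hv : ContDiff ℝ (⊤ : ℕ∞) v) (s : ℝ) :
    pd1 (fun y => u y + s * v y) = fun x => pd1 u x + s * pd1 v x := by
  funext x
  have hu' : DifferentiableAt ℝ u x := (hu.differentiable (by simp)) x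
  have hv' : DifferentiableAt ℝ v x := (hv.differentiable (by simp)) x
  simp only [pd1]
  rw [fderiv_fun_add hu' (hv'.const_mul s), fderiv_const_mul hv']
  simp

lemma pd2_add_smul {u v : ℝ × ℝ → ℝ} (hu : ContDiff ℝ (⊤ : ℕ∞) u) (hv : ContDiff ℝ (⊤ : ℕ∞) v) (s : ℝ) :
    pd2 (fun y => u y + s * v y) = fun x => pd2 u x + s * pd2 v x := by
  funext x
  have hu' : DifferentiableAt ℝ u x := (hu.differentiable (by simp)) x
  have hv' : DifferentiableAt ℝ v x := (hv.differentiable (by simp)) x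
  simp only [pd2]
  rw [fderiv_fun_add hu' (hv'.const_mul s), fderiv_const_mul hv']
  simp

lemma lap_add_smul {u v : ℝ × ℝ → ℝ} (hu : ContDiff ℝ (⊤ : ℕ∞) u) (hv : ContDiff ℝ (⊤ : ℕ∞) v) (s : ℝ) (x : ℝ × ℝ) :
    lap (fun y => u y + s * v y) x = lap u x + s * lap v x := by
  simp only [lap]
  rw [pd1_add_smul hu hv s, pd2_add_smul hu hv s,
    pd1_add_smul (contDiff_pd1 hu) (contDiff_pd1 hv) s,
    pd2_add_smul (contDiff_pd2 hu) (contDiff_pd2 hv) s]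
  ring

/-- Coefficients of `s ↦ E_FCH(u + s v)` integrand as a polynomial in `s`. -/
def cf (τ ε η₁ η₂ : ℝ) (u v : ℝ × ℝ → ℝ) : ℕ → (ℝ × ℝ) → ℝ
  | 0 => fun x => (1/2) * (ε ^ 2 * lap u x - F1 τ (u x)) ^ 2
      - (ε ^ 2 / 2) * η₁ * gradSq u x - η₂ * F τ (u x)
  | 1 => fun x => (ε ^ 2 * lap u x - F1 τ (u x)) * (ε ^ 2 * lap v x - F2 τ (u x) * v x)
      - ε ^ 2 * η₁ * (pd1 u x * pd1 v x + pd2 u x * pd2 v x) - η₂ * (F1 τ (u x) * v x)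
  | 2 => fun x => (1/2) * (ε ^ 2 * lap v x - F2 τ (u x) * v x) ^ 2
      - (ε ^ 2 * lap u x - F1 τ (u x)) * ((1/2) * F3 τ (u x) * v x ^ 2)
      - (ε ^ 2 / 2) * η₁ * gradSq v x - η₂ * ((1/2) * F2 τ (u x) * v x ^ 2)
  | 3 => fun x => -(ε ^ 2 * lap u x - F1 τ (u x)) * v x ^ 3
      - (ε ^ 2 * lap v x - F2 τ (u x) * v x) * ((1/2) * F3 τ (u x) * v x ^ 2)
      - η₂ * ((1/6) * F3 τ (u x) * v x ^ 3)
  | 4 => fun x => (1/2) * ((1/2) * F3 τ (u x) * v x ^ 2) ^ 2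
      - (ε ^ 2 * lap v x - F2 τ (u x) * v x) * v x ^ 3 - η₂ * ((1/4) * v x ^ 4)
  | 5 => fun x => (1/2) * F3 τ (u x) * v x ^ 5
  | 6 => fun x => (1/2) * v x ^ 6
  | _ => fun _ => 0

lemma continuous_cf {u v : ℝ × ℝ → ℝ} (hu : ContDiff ℝ (⊤ : ℕ∞) u) (hv : ContDiff ℝ (⊤ : ℕ∞) v)
    (τ ε η₁ η₂ : ℝ) (k : ℕ) : Continuous (cf τ ε η₁ η₂ u v k) := by
  have hcu : Continuous u := hu.continuous
  have hcv : Continuous v := hv.continuous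
  have h1u : Continuous (pd1 u) := (contDiff_pd1 hu).continuous
  have h2u : Continuous (pd2 u) := (contDiff_pd2 hu).continuous
  have h1v : Continuous (pd1 v) := (contDiff_pd1 hv).continuous
  have h2v : Continuous (pd2 v) := (contDiff_pd2 hv).continuous
  have hlu : Continuous (fun x => lap u x) := by
    simp only [lap]
    exact ((contDiff_pd1 (contDiff_pd1 hu)).continuous).add
      ((contDiff_pd2 (contDiff_pd2 hu)).continuous)
  have hlv : Continuous (fun x => lap v x) := by
    simp only [lap]
    exact ((contDiff_pd1 (contDiff_pd1 hv)).continuous).add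
      ((contDiff_pd2 (contDiff_pd2 hv)).continuous)
  match k with
  | 0 => simp only [cf, F, F1, gradSq]; fun_prop
  | 1 => simp only [cf, F1, F2]; fun_prop
  | 2 => simp only [cf, F1, F2, F3, gradSq]; fun_prop
  | 3 => simp only [cf, F1, F2, F3]; fun_prop
  | 4 => simp only [cf, F2, F3]; fun_prop
  | 5 => simp only [cf, F3]; fun_prop
  | 6 => simp only [cf]; fun_prop
  | (n+7) => simp only [cf]; fun_prop

lemma integrableOn_cf {u v : ℝ × ℝ → ℝ} (hu : ContDiff ℝ (⊤ : ℕ∞) u) (hv : ContDiff ℝ (⊤ : ℕ∞) v)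
    (L τ ε η₁ η₂ : ℝ) (k : ℕ) : IntegrableOn (cf τ ε η₁ η₂ u v k) (box L) := by
  exact (continuous_cf hu hv τ ε η₁ η₂ k).continuousOn.integrableOn_compact
    (isCompact_Icc.prod isCompact_Icc)

/-- Pointwise expansion of the integrand as a polynomial in `s`. -/
lemma integrand_expansion {u v : ℝ × ℝ → ℝ} (hu : ContDiff ℝ (⊤ : ℕ∞) u) (hv : ContDiff ℝ (⊤ : ℕ∞) v)
    (τ ε η₁ η₂ s : ℝ) (x : ℝ × ℝ) :
    (1/2) * (ε ^ 2 * lap (fun y => u y + s * v y) x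
        - deriv (F τ) (u x + s * v x)) ^ 2
      - (ε ^ 2 / 2) * η₁ * gradSq (fun y => u y + s * v y) x
      - η₂ * F τ (u x + s * v x)
    = ∑ k ∈ Finset.range 7, cf τ ε η₁ η₂ u v k x * s ^ k := by
  have hg : gradSq (fun y => u y + s * v y) x
      = (pd1 u x + s * pd1 v x) ^ 2 + (pd2 u x + s * pd2 v x) ^ 2 := by
    simp only [gradSq]
    rw [pd1_add_smul hu hv s, pd2_add_smul hu hv s]
  rw [deriv_F, lap_add_smul hu hv s x, hg]
  simp only [Finset.sum_range_succ, Finset.sum_range_zero, cf, F, F1, F2, F3, gradSq]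
  ring

end FCHaux

/-- Second variation of the FCH energy: `φ(s) = E_FCH(u + s v)` is twice differentiable on `ℝ`
and `φ″(0) = ∫_Ω [(ε²Δv − F″(u)v)² − F‴(u)(ε²Δu − F′(u))v² − ε²η₁|∇v|² − η₂F″(u)v²] dx`. -/
theorem EFCH_second_variation
    (L : ℝ) (hL : 0 < L) (τ ε η₁ η₂ : ℝ) (u v : ℝ × ℝ → ℝ)
    (hu : ContDiff ℝ (⊤ : ℕ∞) u) (hv : ContDiff ℝ (⊤ : ℕ∞) v)
    (hup : IsPeriodic L u) (hvp : IsPeriodic L v) :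
    (∀ s : ℝ, DifferentiableAt ℝ (phiFCH L τ ε η₁ η₂ u v) s) ∧
    (∀ s : ℝ, DifferentiableAt ℝ (deriv (phiFCH L τ ε η₁ η₂ u v)) s) ∧
    deriv (deriv (phiFCH L τ ε η₁ η₂ u v)) 0 =
      ∫ x in box L,
        ((ε ^ 2 * lap v x - deriv (deriv (F τ)) (u x) * v x) ^ 2
          - deriv (deriv (deriv (F τ))) (u x)
            * (ε ^ 2 * lap u x - deriv (F τ) (u x)) * v x ^ 2
          - ε ^ 2 * η₁ * gradSq v x
          - η₂ * deriv (deriv (F τ)) (u x) * v x ^ 2) := by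
  set I : ℕ → ℝ := fun k => ∫ x in box L, FCHaux.cf τ ε η₁ η₂ u v k x with hI
  have hint : ∀ k, IntegrableOn (FCHaux.cf τ ε η₁ η₂ u v k) (box L) volume :=
    fun k => FCHaux.integrableOn_cf hu hv L τ ε η₁ η₂ k
  have hφ : phiFCH L τ ε η₁ η₂ u v = fun s => ∑ k ∈ Finset.range 7, I k * s ^ k := by
    funext s
    simp only [phiFCH, EFCH]
    rw [integral_congr_ae
        (g := fun x => ∑ k ∈ Finset.range 7, FCHaux.cf τ ε η₁ η₂ u v k x * s ^ k)
        (Filter.Eventually.of_forall fun x =>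
          FCHaux.integrand_expansion hu hv τ ε η₁ η₂ s x),
      integral_finset_sum _ fun k _ => (hint k).mul_const _]
    exact Finset.sum_congr rfl fun k _ => integral_mul_const _ _
  have hψd : ∀ s : ℝ, HasDerivAt (fun s : ℝ => ∑ k ∈ Finset.range 7, I k * s ^ k)
      (∑ k ∈ Finset.range 7, I k * (k * s ^ (k - 1))) s := fun s =>
    HasDerivAt.fun_sum fun k _ => (hasDerivAt_pow k s).const_mul (I k)
  have hd1 : deriv (phiFCH L τ ε η₁ η₂ u v)
      = fun s : ℝ => ∑ k ∈ Finset.range 7, I k * (k * s ^ (k - 1)) := by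
    funext s; rw [hφ]; exact (hψd s).deriv
  have hψ'd : ∀ s : ℝ,
      HasDerivAt (fun s : ℝ => ∑ k ∈ Finset.range 7, I k * (k * s ^ (k - 1)))
        (∑ k ∈ Finset.range 7, I k * ((k : ℝ) * ((k - 1 : ℕ) * s ^ (k - 1 - 1)))) s := fun s =>
    HasDerivAt.fun_sum fun k _ => ((hasDerivAt_pow (k - 1) s).const_mul (k : ℝ)).const_mul (I k)
  refine ⟨fun s => ?_, fun s => ?_, ?_⟩
  · rw [hφ]; exact (hψd s).differentiableAt
  · rw [hd1]; exact (hψ'd s).differentiableAt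
  · rw [hd1, (hψ'd 0).deriv]
    have hval : (∑ k ∈ Finset.range 7, I k * ((k : ℝ) * ((k - 1 : ℕ) * (0:ℝ) ^ (k - 1 - 1))))
        = 2 * I 2 := by
      norm_num [Finset.sum_range_succ]
      ring
    rw [hval, hI]
    rw [← integral_const_mul]
    refine integral_congr_ae (Filter.Eventually.of_forall fun x => ?_)
    rw [FCHaux.deriv3_F, FCHaux.deriv2_F, FCHaux.deriv_F]
    simp only [FCHaux.cf, FCHaux.F1, FCHaux.F2, FCHaux.F3]
    ring
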